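/- Let s ∈ (1,∞), let P be a discrete Borel probability measure on ℝ, and let η ∈ [0,∞) be such that whenever x, y ∈ ℝ satisfy 0 < |x − y| < η, at least one of P({x}), P({y}) vanishes. Then the finite equality η · β_s(P) = 2 · β_{s+1}(P) < ∞ holds if and only if there exists x ∈ ℝ such that P = δ_x or P = (δ_x + δ_{x+η})/2. -/

import Mathlib

/-!
For `η = 0` the equality says `β_{s+1} = 0`, so `P` is a point mass. For `η > 0`, write
`u = |x - μ(P)|`: the finite equality says `∫ u^s (2u - η) dP = 0`. If an atom `a` lay at
distance `t ∈ (0, η/2)` from the mean, separation would push every other atom to distance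
`≥ η - t`, where `u^s (2u - η) ≥ (η - 2t) (η - t)^(s-1) u`; as the mean is `μ`, the
other atoms carry `∫ u ≥ P{a} t`, and for `s > 1` the integral would be strictly positive.
So every atom is at distance `0` or `≥ η/2`, the integrand is nonnegative and hence
vanishes a.e.: `P` lives on `{μ - η/2, μ, μ + η/2}`. Separation forbids an atom at `μ`
next to one at `μ ± η/2`, and the mean forces equal weights on `μ ± η/2`.
-/

open MeasureTheory ProbabilityTheory Real Filter Set ENNReal
open scoped Classical

noncomputable def mu (P : Measure ℝ) : ℝ := ∫ x, x ∂P

/-- The absolute central moment `β_s(P) ∈ [0,∞]`, set to `∞` when the first absolute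
moment of `P` is infinite. -/

noncomputable def betaE (s : ℝ) (P : Measure ℝ) : ℝ≥0∞ :=
  if Integrable (fun x : ℝ => x) P then ∫⁻ x, ENNReal.ofReal (|x - mu P| ^ s) ∂P else ∞

/-- A measure on `ℝ` is discrete if it is a (countable) sum of point masses, i.e. the
measure of every (Borel) set is the sum of the masses of its points. -/
def IsDiscreteMeas (P : Measure ℝ) : Prop :=
  ∀ A : Set ℝ, MeasurableSet A → P A = ∑' x : A, P {(x : ℝ)}

/-- Atoms of `P` are at mutual distance `≥ η`. -/
def Separated (P : Measure ℝ) (η : ℝ) : Prop :=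
  ∀ x y : ℝ, 0 < |x - y| → |x - y| < η → P {x} = 0 ∨ P {y} = 0

lemma eq_dirac_of_ae_eq {P : Measure ℝ} [IsProbabilityMeasure P] {a : ℝ}
    (h : ∀ᵐ x ∂P, x = a) : P = Measure.dirac a := by
  simpa using (hasLaw_dirac_of_ae_eq (X := id) h).map_eq

lemma eq_half_smul_dirac_add_dirac {P : Measure ℝ} [IsProbabilityMeasure P] {a b : ℝ}
    (hab : a ≠ b) (h : ∀ᵐ x ∂P, x = a ∨ x = b) (hmean : ∫ x, x ∂P = (a + b) / 2) :
    P = (2⁻¹ : ℝ≥0∞) • (Measure.dirac a + Measure.dirac b) := by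
  have hP : P = P {a} • Measure.dirac a + P {b} • Measure.dirac b := by
    rw [← Measure.restrict_singleton, ← Measure.restrict_singleton,
      ← Measure.restrict_union (disjoint_singleton.mpr hab) (measurableSet_singleton b),
      Measure.restrict_eq_self_of_ae_mem (by simpa [or_comm] using h)]
  have hsum : P.real {a} + P.real {b} = 1 := by
    have := congrArg (fun μ : Measure ℝ => μ.real univ) hP
    simpa [measureReal_def, ENNReal.toReal_add] using this.symm
  have hmean' : P.real {a} * a + P.real {b} * b = (a + b) / 2 := by
    rw [← hmean]
    conv_rhs => rw [hP]
    rw [integral_add_measure, integral_smul_measure, integral_smul_measure, integral_dirac,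
      integral_dirac]
    · simp [measureReal_def]
    all_goals exact (integrable_dirac enorm_lt_top).smul_measure (measure_ne_top _ _)
  have half_of_real_eq (c : ℝ) (hc : P.real {c} = 2⁻¹) : P {c} = 2⁻¹ := by
    rw [← ENNReal.toReal_eq_toReal_iff' (measure_ne_top _ _) (by simp), ← measureReal_def, hc]
    simp
  have ha : P.real {a} = 2⁻¹ := by
    have : (P.real {a} - 2⁻¹) * (a - b) = 0 := by linear_combination hmean' - b * hsum
    simpa [sub_eq_zero, sub_ne_zero.mpr hab] using this
  rw [hP, half_of_real_eq a ha, half_of_real_eq b (by linarith), smul_add]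

section Moments

variable {P : Measure ℝ} {s : ℝ}

lemma integrable_id_of_betaE_ne_top (h : betaE s P ≠ ∞) : Integrable (fun x : ℝ => x) P := by
  by_contra hI
  exact h (if_neg hI)

lemma betaE_eq_lintegral (h : Integrable (fun x : ℝ => x) P) :
    betaE s P = ∫⁻ x, ENNReal.ofReal (|x - mu P| ^ s) ∂P :=
  if_pos h

lemma integrable_abs_sub_mu_rpow (h : betaE s P ≠ ∞) :
    Integrable (fun x => |x - mu P| ^ s) P := by
  refine (lintegral_ofReal_ne_top_iff_integrable (by fun_prop : Measurable _).aestronglyMeasurable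
    (ae_of_all _ fun x => rpow_nonneg (abs_nonneg _) _)).mp ?_
  rwa [← betaE_eq_lintegral (integrable_id_of_betaE_ne_top h)]

lemma toReal_betaE (h : betaE s P ≠ ∞) :
    (betaE s P).toReal = ∫ x, |x - mu P| ^ s ∂P := by
  rw [integral_eq_lintegral_of_nonneg_ae (ae_of_all _ fun x => rpow_nonneg (abs_nonneg _) _)
    (by fun_prop : Measurable _).aestronglyMeasurable,
    betaE_eq_lintegral (integrable_id_of_betaE_ne_top h)]

lemma integrable_and_integral_eq_zero_of_betaE_eq {η : ℝ} (hs : 0 < s)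
    (hβs : betaE s P ≠ ∞) (hβ : betaE (s + 1) P ≠ ∞)
    (heq : ENNReal.ofReal η * betaE s P = 2 * betaE (s + 1) P) (hη : 0 ≤ η) :
    Integrable (fun x => |x - mu P| ^ s * (2 * |x - mu P| - η)) P ∧
      ∫ x, |x - mu P| ^ s * (2 * |x - mu P| - η) ∂P = 0 := by
  have hfun : (fun x => |x - mu P| ^ s * (2 * |x - mu P| - η)) =
      fun x => 2 * |x - mu P| ^ (s + 1) - η * |x - mu P| ^ s := funext fun x => by
    rw [rpow_add' (abs_nonneg _) (by linarith), Real.rpow_one]; ring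
  have hreal := congrArg ENNReal.toReal heq
  rw [toReal_mul, toReal_mul, toReal_ofReal hη, toReal_ofNat, toReal_betaE hβs,
    toReal_betaE hβ] at hreal
  have hint := integrable_abs_sub_mu_rpow hβ
  have hint' := integrable_abs_sub_mu_rpow hβs
  rw [hfun, integral_sub (hint.const_mul 2) (hint'.const_mul η), integral_const_mul,
    integral_const_mul]
  exact ⟨(hint.const_mul 2).sub (hint'.const_mul η), by linarith⟩

lemma integral_sub_mu [IsProbabilityMeasure P] (h : Integrable (fun x : ℝ => x) P) :
    ∫ x, (x - mu P) ∂P = 0 := by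
  simp [integral_sub h (integrable_const _), mu]

lemma eq_dirac_mu_of_betaE_eq_zero [IsProbabilityMeasure P] (hs : 0 < s) (h : betaE s P = 0) :
    P = Measure.dirac (mu P) := by
  rw [betaE_eq_lintegral (integrable_id_of_betaE_ne_top (h ▸ zero_ne_top)),
    lintegral_eq_zero_iff (by fun_prop)] at h
  refine eq_dirac_of_ae_eq ?_
  filter_upwards [h] with x hx
  have : |x - mu P| ^ s = 0 :=
    le_antisymm (ENNReal.ofReal_eq_zero.mp hx) (rpow_nonneg (abs_nonneg _) _)
  rwa [rpow_eq_zero (abs_nonneg _) hs.ne', abs_eq_zero, sub_eq_zero] at this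

end Moments

lemma integrable_id_half_smul_dirac_add_dirac (a b : ℝ) :
    Integrable (fun x : ℝ => x) ((2⁻¹ : ℝ≥0∞) • (Measure.dirac a + Measure.dirac b)) :=
  ((integrable_dirac enorm_lt_top).add_measure (integrable_dirac enorm_lt_top)).smul_measure
    (by simp)

lemma mu_dirac (a : ℝ) : mu (Measure.dirac a) = a := integral_dirac _ a

lemma mu_half_smul_dirac_add_dirac (a b : ℝ) :
    mu ((2⁻¹ : ℝ≥0∞) • (Measure.dirac a + Measure.dirac b)) = (a + b) / 2 := by
  rw [mu, integral_smul_measure, integral_add_measure (integrable_dirac enorm_lt_top)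
    (integrable_dirac enorm_lt_top), integral_dirac, integral_dirac]
  simp
  ring

lemma betaE_dirac {s : ℝ} (hs : s ≠ 0) (a : ℝ) : betaE s (Measure.dirac a) = 0 := by
  rw [betaE_eq_lintegral (integrable_dirac enorm_lt_top), lintegral_dirac, mu_dirac]
  simp [zero_rpow hs]

lemma betaE_half_smul_dirac_add_dirac_add (s : ℝ) (x : ℝ) {η : ℝ} (hη : 0 ≤ η) :
    betaE s ((2⁻¹ : ℝ≥0∞) • (Measure.dirac x + Measure.dirac (x + η))) =
      ENNReal.ofReal ((η / 2) ^ s) := by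
  rw [betaE_eq_lintegral (integrable_id_half_smul_dirac_add_dirac _ _),
    mu_half_smul_dirac_add_dirac, lintegral_smul_measure, lintegral_add_measure,
    lintegral_dirac, lintegral_dirac,
    show x - (x + (x + η)) / 2 = -(η / 2) by ring,
    show x + η - (x + (x + η)) / 2 = η / 2 by ring,
    abs_neg, abs_of_nonneg (by linarith), ← two_mul, smul_eq_mul, ← mul_assoc,
    ENNReal.inv_mul_cancel two_ne_zero ofNat_ne_top, one_mul]

lemma ofReal_mul_ofReal_half_rpow {η : ℝ} (hη : 0 ≤ η) {s : ℝ} (hs : s + 1 ≠ 0) :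
    ENNReal.ofReal η * ENNReal.ofReal ((η / 2) ^ s) =
      2 * ENNReal.ofReal ((η / 2) ^ (s + 1)) := by
  rw [← ENNReal.ofReal_mul hη, ← ENNReal.ofReal_ofNat 2, ← ENNReal.ofReal_mul zero_le_two,
    rpow_add' (by linarith) hs, Real.rpow_one]
  ring_nf

lemma IsDiscreteMeas.ae_measure_singleton_ne_zero {P : Measure ℝ} [IsFiniteMeasure P]
    (hdisc : IsDiscreteMeas P) : ∀ᵐ x ∂P, P {x} ≠ 0 := by
  have hsupp : (Function.support fun x : ℝ => P {x}).Countable := by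
    refine Summable.countable_support_ennreal ?_
    rw [← (Equiv.Set.univ ℝ).tsum_eq (fun x => P {x})]
    exact hdisc univ MeasurableSet.univ ▸ measure_ne_top P univ
  have hnull : P (Function.support fun x : ℝ => P {x})ᶜ = 0 := by
    rw [hdisc _ hsupp.measurableSet.compl]
    exact ENNReal.tsum_eq_zero.mpr fun x => Function.notMem_support.mp x.2
  simpa [ae_iff, Function.compl_support] using hnull

lemma Separated.le_abs_sub {P : Measure ℝ} {η x y : ℝ} (hsep : Separated P η)
    (hx : P {x} ≠ 0) (hy : P {y} ≠ 0) (hxy : x ≠ y) : η ≤ |x - y| := by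
  by_contra! hlt
  exact (hsep x y (abs_pos.mpr (sub_ne_zero.mpr hxy)) hlt).elim hx hy

lemma mul_abs_le_setIntegral_compl_abs {α : Type*} [MeasurableSpace α]
    [MeasurableSingletonClass α] {μ : Measure α} {f : α → ℝ} (hf : Integrable f μ)
    (h0 : ∫ x, f x ∂μ = 0) (a : α) :
    μ.real {a} * |f a| ≤ ∫ x in {a}ᶜ, |f x| ∂μ := by
  have hsplit := integral_add_compl (measurableSet_singleton a) hf
  rw [h0, integral_singleton, smul_eq_mul] at hsplit
  calc μ.real {a} * |f a| = |∫ x in {a}ᶜ, f x ∂μ| := by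
        rw [eq_neg_of_add_eq_zero_right hsplit, abs_neg, abs_mul, abs_of_nonneg measureReal_nonneg]
    _ ≤ ∫ x in {a}ᶜ, |f x| ∂μ := abs_integral_le_integral_abs

lemma mul_le_rpow_mul_two_mul_sub {s t u η : ℝ} (hs : 1 ≤ s) (ht : 0 ≤ t) (htη : 2 * t < η)
    (hu : η - t ≤ u) : (η - 2 * t) * (η - t) ^ (s - 1) * u ≤ u ^ s * (2 * u - η) := by
  have hu0 : 0 < u := by linarith
  have hpow : (η - t) ^ (s - 1) ≤ u ^ (s - 1) := rpow_le_rpow (by linarith) hu (by linarith)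
  calc (η - 2 * t) * (η - t) ^ (s - 1) * u ≤ (2 * u - η) * u ^ (s - 1) * u :=
        mul_le_mul_of_nonneg_right
          (mul_le_mul (by linarith) hpow (rpow_nonneg (by linarith) _) (by linarith)) hu0.le
    _ = u ^ s * (2 * u - η) := by
        rw [mul_assoc, ← rpow_add_one hu0.ne', sub_add_cancel]; ring

section EqualityCase

variable {P : Measure ℝ} [IsProbabilityMeasure P] {s η : ℝ}

lemma le_two_mul_abs_sub_mu_of_integral_eq_zero (hs : 1 < s)
    (hatoms : ∀ᵐ x ∂P, P {x} ≠ 0) (hsep : Separated P η)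
    (hInt : Integrable (fun x : ℝ => x) P)
    (hg : Integrable (fun x => |x - mu P| ^ s * (2 * |x - mu P| - η)) P)
    (h0 : ∫ x, |x - mu P| ^ s * (2 * |x - mu P| - η) ∂P = 0)
    {a : ℝ} (ha : P {a} ≠ 0) (hat : 0 < |a - mu P|) : η ≤ 2 * |a - mu P| := by
  by_contra! htη
  have hsplit := integral_add_compl (measurableSet_singleton a) hg
  rw [h0, integral_singleton, smul_eq_mul] at hsplit
  set t := |a - mu P|
  set p := P.real {a}
  have hp : 0 < p := ENNReal.toReal_pos ha (measure_ne_top P _)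
  have hfar : ∀ x, P {x} ≠ 0 → x ≠ a → η - t ≤ |x - mu P| := fun x hx hxa => by
    have hsep_xa := hsep.le_abs_sub hx ha hxa
    have htri := abs_sub_le x (mu P) a
    rw [abs_sub_comm (mu P)] at htri
    linarith
  have hcompl : (η - 2 * t) * (η - t) ^ (s - 1) * (p * t) ≤
      ∫ x in {a}ᶜ, |x - mu P| ^ s * (2 * |x - mu P| - η) ∂P := by
    calc (η - 2 * t) * (η - t) ^ (s - 1) * (p * t)
        ≤ (η - 2 * t) * (η - t) ^ (s - 1) * ∫ x in {a}ᶜ, |x - mu P| ∂P := by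
          refine mul_le_mul_of_nonneg_left ?_
            (mul_nonneg (by linarith) (rpow_nonneg (by linarith) _))
          simpa [mul_comm] using mul_abs_le_setIntegral_compl_abs
            (hInt.sub (integrable_const (mu P))) (integral_sub_mu hInt) a
      _ ≤ ∫ x in {a}ᶜ, |x - mu P| ^ s * (2 * |x - mu P| - η) ∂P := by
          rw [← integral_const_mul]
          refine integral_mono_ae ((hInt.sub (integrable_const _)).abs.restrict.const_mul _)
            hg.restrict ?_
          filter_upwards [ae_restrict_of_ae hatoms,
            ae_restrict_mem (measurableSet_singleton a).compl] with x hx hxa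
          exact mul_le_rpow_mul_two_mul_sub hs.le (abs_nonneg _) htη (hfar x hx hxa)
  have hpow : t ^ (s - 1) < (η - t) ^ (s - 1) :=
    rpow_lt_rpow hat.le (by linarith) (by linarith)
  have hts : t ^ s = t ^ (s - 1) * t := by
    rw [← rpow_add_one hat.ne', sub_add_cancel]
  have hgap : 0 < p * t * (η - 2 * t) * ((η - t) ^ (s - 1) - t ^ (s - 1)) := by
    have := sub_pos.mpr hpow
    have := sub_pos.mpr htη
    positivity
  have hfactor : p * (t ^ s * (2 * t - η)) + (η - 2 * t) * (η - t) ^ (s - 1) * (p * t) =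
      p * t * (η - 2 * t) * ((η - t) ^ (s - 1) - t ^ (s - 1)) := by
    rw [hts]; ring
  linarith

lemma ae_eq_mu_or_abs_sub_mu_eq_half (hs : 1 < s)
    (hatoms : ∀ᵐ x ∂P, P {x} ≠ 0) (hsep : Separated P η)
    (hInt : Integrable (fun x : ℝ => x) P)
    (hg : Integrable (fun x => |x - mu P| ^ s * (2 * |x - mu P| - η)) P)
    (h0 : ∫ x, |x - mu P| ^ s * (2 * |x - mu P| - η) ∂P = 0) :
    ∀ᵐ x ∂P, x = mu P ∨ |x - mu P| = η / 2 := by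
  have hnonneg : 0 ≤ᵐ[P] fun x => |x - mu P| ^ s * (2 * |x - mu P| - η) := by
    filter_upwards [hatoms] with x hx
    rcases (abs_nonneg (x - mu P)).eq_or_lt with hx0 | hx0
    · simp [← hx0, zero_rpow (by linarith : s ≠ 0)]
    · have hfar := le_two_mul_abs_sub_mu_of_integral_eq_zero hs hatoms hsep hInt hg h0 hx hx0
      exact mul_nonneg (rpow_nonneg hx0.le _) (by linarith)
  filter_upwards [(integral_eq_zero_iff_of_nonneg_ae hnonneg hg).mp h0] with x hx
  rcases mul_eq_zero.mp hx with hx | hx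
  · rw [rpow_eq_zero (abs_nonneg _) (by linarith), abs_eq_zero, sub_eq_zero] at hx
    exact Or.inl hx
  · exact Or.inr (by linarith)

lemma exists_eq_dirac_or_eq_half_smul_dirac_add_dirac_add (hdisc : IsDiscreteMeas P)
    (hη : 0 < η) (hsep : Separated P η) (h : ∀ᵐ x ∂P, x = mu P ∨ |x - mu P| = η / 2) :
    ∃ x : ℝ, P = Measure.dirac x ∨
      P = (2⁻¹ : ℝ≥0∞) • (Measure.dirac x + Measure.dirac (x + η)) := by
  by_cases hmid : P {mu P} = 0
  · refine ⟨mu P - η / 2, Or.inr ?_⟩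
    refine eq_half_smul_dirac_add_dirac (by linarith) ?_ ?_
    · filter_upwards [h, measure_eq_zero_iff_ae_notMem.mp hmid] with x hx hxm
      rcases (abs_eq (by linarith)).mp (hx.resolve_left hxm) with hx | hx
      · exact Or.inr (by linarith)
      · exact Or.inl (by linarith)
    · change mu P = _
      ring
  · refine ⟨mu P, Or.inl (eq_dirac_of_ae_eq ?_)⟩
    filter_upwards [h, hdisc.ae_measure_singleton_ne_zero] with x hx hxa
    refine hx.resolve_right fun hhalf => ?_
    have hne : x ≠ mu P := by
      rintro rfl
      simp at hhalf
      linarith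
    linarith [hsep.le_abs_sub hxa hmid hne]

end EqualityCase

/-- equality discussion in the von Mises inequality for `s > 1`: the finite
equality `η·β_s = 2·β_{s+1} < ∞` holds iff `P = δ_x` or `P = (δ_x + δ_{x+η})/2` for some `x`. -/
theorem von_mises_equality_s_gt_one (s : ℝ) (hs : 1 < s) (P : Measure ℝ)
    (hP : IsProbabilityMeasure P) (hdisc : IsDiscreteMeas P) (η : ℝ) (hη : 0 ≤ η)
    (hsep : Separated P η) :
    (ENNReal.ofReal η * betaE s P = 2 * betaE (s + 1) P ∧ betaE (s + 1) P < ∞) ↔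
      ∃ x : ℝ, P = Measure.dirac x ∨
        P = (2⁻¹ : ℝ≥0∞) • (Measure.dirac x + Measure.dirac (x + η)) := by
  constructor
  · rintro ⟨heq, hfin⟩
    rcases hη.eq_or_lt with rfl | hη0
    · refine ⟨mu P, Or.inl (eq_dirac_mu_of_betaE_eq_zero (s := s + 1) (by linarith) ?_)⟩
      simpa using heq.symm
    have hβs : betaE s P ≠ ∞ := fun htop => by
      rw [htop, mul_top (by simpa using hη0)] at heq
      exact mul_ne_top ofNat_ne_top hfin.ne heq.symm
    obtain ⟨hg, h0⟩ :=
      integrable_and_integral_eq_zero_of_betaE_eq (by linarith) hβs hfin.ne heq hη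
    exact exists_eq_dirac_or_eq_half_smul_dirac_add_dirac_add hdisc hη0 hsep
      (ae_eq_mu_or_abs_sub_mu_eq_half hs hdisc.ae_measure_singleton_ne_zero hsep
        (integrable_id_of_betaE_ne_top hβs) hg h0)
  · rintro ⟨x, rfl | rfl⟩
    · simp [betaE_dirac (by linarith : s ≠ 0), betaE_dirac (by linarith : s + 1 ≠ 0)]
    · rw [betaE_half_smul_dirac_add_dirac_add _ _ hη, betaE_half_smul_dirac_add_dirac_add _ _ hη]
      exact ⟨ofReal_mul_ofReal_half_rpow hη (by linarith), ofReal_lt_top⟩
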